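/- Let n ∈ ℕ and α ∈ (0,n), and let I_α denote the Riesz potential on ℝⁿ. Let X be a rearrangement-invariant quasi-Banach lattice over ℝⁿ (with Lebesgue measure) containing simple functions such that X ↪ L^{n/α,1}(ℝⁿ) continuously and limsup_{t→∞} t^{-α/n} φ_X(t) < ∞. Then L^∞(ℝⁿ) is the optimal target for (I_α, X, 𝒞), where 𝒞 is the collection of all rearrangement-invariant quasi-Banach lattices over ℝⁿ that are Fatou-representable: I_α : X → L^∞(ℝⁿ) is bounded, and for every Y ∈ 𝒞 such that I_α : X → Y is bounded, L^∞(ℝⁿ) ↪ Y. -/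

import Mathlib

open MeasureTheory Set Filter
open scoped ENNReal NNReal Classical Topology

noncomputable section

variable {α β : Type*} [MeasurableSpace α] [MeasurableSpace β]

/-- The nonincreasing rearrangement `f*` of `f`, as a function of `t : ℝ≥0∞`:
`f*(t) = inf {λ : μ(|f| > λ) ≤ t}`. -/
def rearr (μ : Measure α) (f : α → ℝ) (t : ℝ≥0∞) : ℝ≥0∞ :=
  sInf {l : ℝ≥0∞ | μ {x | l < (‖f x‖₊ : ℝ≥0∞)} ≤ t}

/-- The nonincreasing rearrangement as a real-valued function on `(0,∞) ⊆ ℝ`. -/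
def rearrFun (μ : Measure α) (f : α → ℝ) (t : ℝ) : ℝ :=
  (rearr μ f (ENNReal.ofReal t)).toReal

/-- A quasi-Banach lattice over `(α, μ)`: the collection of (a.e.-classes of) measurable
functions `f` with `N f < ∞`, where the functional `N` (extended by `∞` outside the space)
is a quasi-norm with the lattice property, and the space is complete. -/
structure QBLattice (μ : Measure α) where
  N : (α → ℝ) → ℝ≥0∞
  zero : N (fun _ => 0) = 0
  eq_zero : ∀ f : α → ℝ, AEMeasurable f μ → N f = 0 → f =ᵐ[μ] 0
  mem_aemeasurable : ∀ f : α → ℝ, N f < ⊤ → AEMeasurable f μ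
  smul : ∀ (c : ℝ) (f : α → ℝ), N f < ⊤ → N (fun x => c * f x) = ENNReal.ofReal |c| * N f
  quasi_triangle : ∃ K : ℝ≥0, 1 ≤ K ∧
    ∀ f g : α → ℝ, N (fun x => f x + g x) ≤ K * (N f + N g)
  lattice : ∀ f g : α → ℝ, AEMeasurable f μ → (∀ᵐ x ∂μ, |f x| ≤ |g x|) → N f ≤ N g
  complete : ∀ F : ℕ → α → ℝ, (∀ k, N (F k) < ⊤) →
    (∀ ε : ℝ≥0∞, 0 < ε → ∃ k₀ : ℕ, ∀ m k, k₀ ≤ m → k₀ ≤ k →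
      N (fun x => F m x - F k x) < ε) →
    ∃ g : α → ℝ, N g < ⊤ ∧ Tendsto (fun k => N (fun x => F k x - g x)) atTop (nhds 0)

/-- A quasi-Banach lattice is rearrangement-invariant if its functional only depends on the
nonincreasing rearrangement. -/
def QBLattice.RearrInv {μ : Measure α} (X : QBLattice μ) : Prop :=
  ∀ f g : α → ℝ, rearr μ f = rearr μ g → X.N f = X.N g

/-- The fundamental function of a (rearrangement-invariant) quasi-Banach lattice:
the common value of the quasi-norm on characteristic functions of sets of measure `t`. -/
def QBLattice.fund {μ : Measure α} (X : QBLattice μ) (t : ℝ≥0∞) : ℝ≥0∞ :=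
  ⨅ (E : Set α) (_ : MeasurableSet E) (_ : μ E = t), X.N (E.indicator fun _ => (1 : ℝ))

/-- The underlying set of a quasi-Banach lattice. -/
def QBLattice.carrier {μ : Measure α} (X : QBLattice μ) : Set (α → ℝ) :=
  {f | X.N f < ⊤}

/-- A `μ`-simple function written with positive coefficients and nested measurable sets of
finite measure. -/
def NestedSimple (μ : Measure α) (s : α → ℝ) : Prop :=
  ∃ (N : ℕ) (a : Fin N → ℝ) (E : Fin N → Set α),
    (∀ k, 0 < a k) ∧ (∀ k, MeasurableSet (E k)) ∧ (∀ k, μ (E k) < ⊤) ∧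
    (∀ j k, j ≤ k → E j ⊆ E k) ∧
    s = fun x => ∑ k, a k * (E k).indicator (fun _ => (1 : ℝ)) x

/-- The measure space is nonatomic. -/
def Nonatomic (μ : Measure α) : Prop :=
  ∀ s : Set α, MeasurableSet s → 0 < μ s →
    ∃ t ⊆ s, MeasurableSet t ∧ 0 < μ t ∧ μ t < μ s

/-- Continuous embedding `X ↪ Y` of quasi-Banach lattices. -/
def Embeds {μ : Measure α} (X Y : QBLattice μ) : Prop :=
  ∃ C : ℝ≥0, ∀ f : α → ℝ, Y.N f ≤ C * X.N f

/-- Boundedness of an operator `T : X → Y`. -/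
def OpBounded {μ : Measure α} {ν : Measure β} (T : (α → ℝ) → β → ℝ)
    (X : QBLattice μ) (Y : QBLattice ν) : Prop :=
  ∃ C : ℝ≥0, ∀ f : α → ℝ, Y.N (T f) ≤ C * X.N f

/-- `Y` is the optimal target for `(T, X, 𝓒)`. -/
def OptimalTarget {μ : Measure α} {ν : Measure β} (T : (α → ℝ) → β → ℝ)
    (X : QBLattice μ) (𝓒 : Set (QBLattice ν)) (Y : QBLattice ν) : Prop :=
  OpBounded T X Y ∧ ∀ Z ∈ 𝓒, OpBounded T X Z → Embeds Y Z

/-- A quasi-Banach lattice is normable if its quasi-norm is equivalent to a norm. -/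
def Normable {μ : Measure α} (X : QBLattice μ) : Prop :=
  ∃ n : (α → ℝ) → ℝ≥0∞,
    (∀ f g : α → ℝ, n (fun x => f x + g x) ≤ n f + n g) ∧
    (∀ (c : ℝ) (f : α → ℝ), n f < ⊤ → n (fun x => c * f x) = ENNReal.ofReal |c| * n f) ∧
    ∃ C : ℝ≥0, 0 < C ∧ ∀ f : α → ℝ, n f ≤ C * X.N f ∧ X.N f ≤ C * n f

/-- `T` is a sublinear operator defined on `X` with values in the (ν-a.e. finite)
measurable functions. -/
def SublinearOn {μ : Measure α} (ν : Measure β) (T : (α → ℝ) → β → ℝ)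
    (X : QBLattice μ) : Prop :=
  (∀ f : α → ℝ, X.N f < ⊤ → AEMeasurable (T f) ν) ∧
  (∀ f g : α → ℝ, X.N f < ⊤ → X.N g < ⊤ →
    ∀ᵐ y ∂ν, |T (fun x => f x + g x) y| ≤ |T f y| + |T g y|) ∧
  (∀ (c : ℝ) (f : α → ℝ), X.N f < ⊤ →
    ∀ᵐ y ∂ν, |T (fun x => c * f x) y| = |c| * |T f y|)

/-- `T` is simply approximable from above in the compatible triple `(T, X, 𝓒)`. -/
def SimplyApproxAbove {μ : Measure α} {ν : Measure β} (T : (α → ℝ) → β → ℝ)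
    (X : QBLattice μ) (𝓒 : Set (QBLattice ν)) : Prop :=
  (∀ s : α → ℝ, NestedSimple μ s → X.N s < ⊤) ∧
  ∃ S : (α → ℝ) → ℕ → α → ℝ,
    (∀ f : α → ℝ, X.N f < ⊤ → (∀ j, NestedSimple μ (S f j)) ∧
      Filter.limsup (fun j => X.N (S f j)) atTop ≤ X.N f) ∧
    ∀ Y ∈ 𝓒, ∃ C : ℝ≥0, 0 < C ∧ ∀ f : α → ℝ, X.N f < ⊤ →
      Y.N (T f) ≤ C * Filter.limsup (fun j => Y.N (T (S f j))) atTop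

/-- The domain `[0, μ(R))` of the fundamental-type functions, as a subset of `ℝ`. -/
def edom (μ : Measure α) : Set ℝ :=
  {t : ℝ | 0 ≤ t ∧ ENNReal.ofReal t < μ Set.univ}

/-- The Lorentz endpoint functional `‖f‖_{Λ_φ} = ∫₀^{μ(R)} f*(t) dφ(t)`
(a Lebesgue–Stieltjes integral). -/
def lorentzEndpoint (μ : Measure α) (φ : StieltjesFunction ℝ) (f : α → ℝ) : ℝ≥0∞ :=
  ∫⁻ t in edom μ, rearr μ f (ENNReal.ofReal t) ∂φ.measure

/-- The weak Fatou property with constant `C`. -/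
def WeakFatouC {μ : Measure α} (Z : QBLattice μ) (C : ℝ≥0) : Prop :=
  ∀ (g : ℕ → α → ℝ) (f : α → ℝ), (∀ k, AEMeasurable (g k) μ) →
    (∀ k, ∀ᵐ x ∂μ, 0 ≤ g k x ∧ g k x ≤ g (k + 1) x) →
    (∀ᵐ x ∂μ, Tendsto (fun k => g k x) atTop (nhds (f x))) →
    (⨆ k, Z.N (g k)) < ⊤ → Z.N f ≤ C * ⨆ k, Z.N (g k)

/-- The weak Fatou property. -/
def WeakFatou {μ : Measure α} (Z : QBLattice μ) : Prop :=
  ∃ C : ℝ≥0, 0 < C ∧ WeakFatouC Z C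

/-- Lebesgue measure on the interval `(0, c) ⊆ ℝ` (equal to `(0,∞)` when `c = ∞`). -/
def intervalM (c : ℝ≥0∞) : Measure ℝ :=
  (volume : Measure ℝ).restrict {t : ℝ | 0 < t ∧ ENNReal.ofReal t < c}

/-- A rearrangement-invariant quasi-Banach lattice `Y` over `(β, ν)` is Fatou-representable
if there is a rearrangement-invariant quasi-Banach lattice over `(0, ν(S))` with the weak
Fatou property representing the functional of `Y` via `‖f‖_Y = ‖f*‖_{Ȳ}`. -/
def FatouRepresentable {ν : Measure β} (Y : QBLattice ν) : Prop :=
  ∃ Ybar : QBLattice (intervalM (ν Set.univ)),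
    Ybar.RearrInv ∧ WeakFatou Ybar ∧ ∀ f : β → ℝ, Y.N f = Ybar.N (rearrFun ν f)

/-- The weak Lorentz functional `‖f‖_{q,∞}`; for `q = ∞` this is the essential supremum. -/
def weakNorm (μ : Measure α) (q : ℝ≥0∞) (f : α → ℝ) : ℝ≥0∞ :=
  if q = ⊤ then essSup (fun x => (‖f x‖₊ : ℝ≥0∞)) μ
  else ⨆ (s : ℝ) (_ : 0 < s), ENNReal.ofReal s * μ {x | s < |f x|} ^ (1 / q).toReal

/-- The `L^∞` functional (essential supremum). -/
def linftyNorm (μ : Measure α) (f : α → ℝ) : ℝ≥0∞ :=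
  essSup (fun x => (‖f x‖₊ : ℝ≥0∞)) μ

/-- The Lorentz functional `‖f‖_{p,q}` for `p, q ∈ (0,∞)`. -/
def lorentzNorm (μ : Measure α) (p q : ℝ) (f : α → ℝ) : ℝ≥0∞ :=
  (ENNReal.ofReal p * ∫⁻ s in Set.Ioi (0 : ℝ),
    (ENNReal.ofReal s * μ {x | s < |f x|} ^ (1 / p)) ^ q * (ENNReal.ofReal s)⁻¹) ^ (1 / q)

/-- The functional of `L^∞₀`: the essential sup norm for essentially bounded functions
supported in a set of finite measure, and `∞` otherwise. -/
def Linf0 (μ : Measure α) (f : α → ℝ) : ℝ≥0∞ :=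
  if (∃ E : Set α, MeasurableSet E ∧ μ E < ⊤ ∧ ∀ᵐ x ∂μ, x ∉ E → f x = 0) ∧
      linftyNorm μ f < ⊤
  then linftyNorm μ f else ⊤

/-- The operator `R_σ g(t) = t^{-1/q} ∫₀^{t^m} g(s) s^{1/p - 1} ds` for `σ = [p,q,m]`
(with `t^{-1/q} = 1` when `q = ∞` and `s^{1/p} = 1` when `p = ∞`). -/
def Rop (p q : ℝ≥0∞) (m : ℝ) (g : ℝ → ℝ) (t : ℝ) : ℝ≥0∞ :=
  ENNReal.ofReal t ^ (-(1 / q).toReal) *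
    ∫⁻ s in Set.Ioc (0 : ℝ) (t ^ m),
      ENNReal.ofReal (g s) * ENNReal.ofReal s ^ ((1 / p).toReal - 1)

/-- The operator `S⁰_σ g(t) = t^{-1/q} sup_{0 < s ≤ t^m} g(s) s^{1/p}` for `σ = [p,q,m]`. -/
def S0op (p q : ℝ≥0∞) (m : ℝ) (g : ℝ → ℝ) (t : ℝ) : ℝ≥0∞ :=
  ENNReal.ofReal t ^ (-(1 / q).toReal) *
    ⨆ (s : ℝ) (_ : 0 < s) (_ : s ≤ t ^ m),
      ENNReal.ofReal (g s) * ENNReal.ofReal s ^ (1 / p).toReal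

/-- The operator `H_σ g(t) = t^{-1/q} ∫_{t^m}^∞ g(s) s^{1/p - 1} ds` for `σ = [p,q,m]`. -/
def Hop (p q : ℝ≥0∞) (m : ℝ) (g : ℝ → ℝ) (t : ℝ) : ℝ≥0∞ :=
  ENNReal.ofReal t ^ (-(1 / q).toReal) *
    ∫⁻ s in Set.Ioi (t ^ m),
      ENNReal.ofReal (g s) * ENNReal.ofReal s ^ ((1 / p).toReal - 1)

/-- The operator `S^∞_σ g(t) = t^{-1/q} sup_{t^m ≤ s < ∞} g(s) s^{1/p}` for `σ = [p,q,m]`. -/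
def Sinfop (p q : ℝ≥0∞) (m : ℝ) (g : ℝ → ℝ) (t : ℝ) : ℝ≥0∞ :=
  ENNReal.ofReal t ^ (-(1 / q).toReal) *
    ⨆ (s : ℝ) (_ : t ^ m ≤ s),
      ENNReal.ofReal (g s) * ENNReal.ofReal s ^ (1 / p).toReal

/-- The characteristic function of the interval `(0, a)` for `a : ℝ≥0∞`. -/
def chiInterval (a : ℝ≥0∞) : ℝ → ℝ :=
  Set.indicator {s : ℝ | 0 < s ∧ ENNReal.ofReal s < a} fun _ => 1

/-- The Riesz potential `I_γ f(x) = c_γ ∫ f(y) |x - y|^{γ - n} dy` on `ℝⁿ`. -/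
def riesz (n : ℕ) (γ : ℝ) (f : EuclideanSpace ℝ (Fin n) → ℝ)
    (x : EuclideanSpace ℝ (Fin n)) : ℝ :=
  (Real.pi ^ ((n : ℝ) / 2) * 2 ^ γ * Real.Gamma (γ / 2) / Real.Gamma (((n : ℝ) - γ) / 2)) *
    ∫ y, f y * ‖x - y‖ ^ (γ - (n : ℝ))

/-- The Hardy–Littlewood maximal operator on `ℝⁿ` (supremum over all balls containing `x`). -/
def hlMax {n : ℕ} (f : EuclideanSpace ℝ (Fin n) → ℝ) (x : EuclideanSpace ℝ (Fin n)) : ℝ :=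
  (⨆ (z : EuclideanSpace ℝ (Fin n)) (r : ℝ) (_ : 0 < r) (_ : x ∈ Metric.ball z r),
    (volume (Metric.ball z r))⁻¹ * ∫⁻ y in Metric.ball z r, (‖f y‖₊ : ℝ≥0∞)).toReal

/-!
Boundedness. `|I_γ f(x)| ≤ c ∫ |f(y)| |x - y|^(γ-n) dy`, and by the layer-cake formula the right
side is `c ∫₀^∞ ν_x {|f| > s} ds`, where `ν_x` has density `|x - ·|^(γ-n)`. Splitting a set `A` at
the ball around `x` of radius `|A|^(1/n)` gives `ν_x(A) ≲ |A|^(γ/n)` uniformly in `x`, so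
`‖I_γ f‖_∞ ≲ ‖f‖_{n/γ,1} ≲ ‖f‖_X`.

Optimality. On a ball `B` one has `I_γ χ_B ≳ |B|^(γ/n)`, so `χ_B ≤ I_γ (|B|^(-γ/n) χ_B)` up to a
constant and `‖χ_B‖_Y ≲ |B|^(-γ/n) φ_X(|B|)`, which stays bounded as `|B| → ∞`. The rearrangements
`χ_(0,|B|)` increase to `1`, so the weak Fatou property of the representing space `Ȳ` puts `1` in
`Ȳ`, and then `‖f‖_Y = ‖f*‖_Ȳ ≤ ‖f‖_∞ ‖1‖_Ȳ`.
-/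

open Metric Module

theorem rearr_indicator_one (μ : Measure α) (B : Set α) (s : ℝ≥0∞) :
    rearr μ (B.indicator fun _ => (1 : ℝ)) s = if s < μ B then 1 else 0 := by
  have hlevel (l : ℝ≥0∞) :
      {x | l < (‖B.indicator (fun _ => (1 : ℝ)) x‖₊ : ℝ≥0∞)} = if l < 1 then B else ∅ := by
    ext x
    by_cases hx : x ∈ B <;> by_cases hl : l < 1 <;> simp [hx, hl]
  simp_rw [rearr, hlevel, apply_ite μ, measure_empty]
  split_ifs with h
  · refine le_antisymm (sInf_le (by simp)) (le_sInf fun l hl => ?_)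
    by_contra! hl1
    simp only [mem_ofPred_eq, if_pos hl1] at hl
    exact (hl.trans_lt h).false
  · refine nonpos_iff_eq_zero.1 (sInf_le ?_)
    simp [not_lt.1 h]

theorem rearrFun_indicator_one (μ : Measure α) (B : Set α) (t : ℝ) :
    rearrFun μ (B.indicator fun _ => (1 : ℝ)) t = if ENNReal.ofReal t < μ B then 1 else 0 := by
  rw [rearrFun, rearr_indicator_one]
  split_ifs <;> simp

theorem measurable_rearrFun (μ : Measure α) (f : α → ℝ) : Measurable (rearrFun μ f) := by
  have hanti : Antitone fun t : ℝ => rearr μ f (ENNReal.ofReal t) := fun s t hst =>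
    sInf_le_sInf fun l hl => hl.trans (ENNReal.ofReal_le_ofReal hst)
  exact ENNReal.measurable_toReal.comp hanti.measurable

theorem rearr_le_linftyNorm (μ : Measure α) (f : α → ℝ) (t : ℝ≥0∞) :
    rearr μ f t ≤ linftyNorm μ f := by
  refine sInf_le ?_
  have h : μ {x | ¬ (‖f x‖₊ : ℝ≥0∞) ≤ linftyNorm μ f} = 0 :=
    ae_iff.1 (ENNReal.ae_le_essSup fun x => (‖f x‖₊ : ℝ≥0∞))
  simp only [not_le] at h
  simp [h]

theorem QBLattice.RearrInv.fund_eq {μ : Measure α} {X : QBLattice μ} (hX : X.RearrInv)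
    {B : Set α} (hB : MeasurableSet B) :
    X.fund (μ B) = X.N (B.indicator fun _ => (1 : ℝ)) := by
  refine le_antisymm (iInf₂_le_of_le B hB (iInf_le _ rfl)) ?_
  refine le_iInf₂ fun E _ => le_iInf fun hE => (hX _ _ ?_).le
  ext s
  rw [rearr_indicator_one, rearr_indicator_one, hE]

theorem ENNReal.exists_le_rpow_mul_of_limsup_lt_top {g : ℝ≥0∞ → ℝ≥0∞} {p : ℝ}
    (h : limsup (fun t => t ^ (-p) * g t) (𝓝[<] ⊤) < ⊤) :
    ∃ a < ⊤, ∃ M < ⊤, ∀ t, a < t → t < ⊤ → g t ≤ t ^ p * M := by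
  set L := limsup (fun t => t ^ (-p) * g t) (𝓝[<] ⊤)
  have hev : ∀ᶠ t in 𝓝[<] ⊤, t ^ (-p) * g t < L + 1 :=
    eventually_lt_of_limsup_lt (ENNReal.lt_add_right h.ne one_ne_zero)
  rw [eventually_nhdsWithin_iff] at hev
  obtain ⟨a, ha, hsub⟩ := ENNReal.nhds_top_basis.eventually_iff.1 hev
  refine ⟨a, ha, L + 1, ENNReal.add_lt_top.2 ⟨h, ENNReal.one_lt_top⟩, fun t hat htop => ?_⟩
  have ht0 : t ≠ 0 := (zero_le.trans_lt hat).ne'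
  calc g t = t ^ p * (t ^ (-p) * g t) := by
        rw [← mul_assoc, ← ENNReal.rpow_add _ _ ht0 htop.ne, add_neg_cancel, ENNReal.rpow_zero,
          one_mul]
    _ ≤ t ^ p * (L + 1) := by gcongr; exact (hsub hat htop).le

theorem QBLattice.N_rearrFun_le_mul_linftyNorm {ν : Measure ℝ} (Z : QBLattice ν)
    (hZ : Z.N (fun _ => 1) < ⊤) {μ : Measure α} {f : α → ℝ} (hf : linftyNorm μ f ≠ ⊤) :
    Z.N (rearrFun μ f) ≤ Z.N (fun _ => 1) * linftyNorm μ f := by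
  have hf' : |(linftyNorm μ f).toReal| = (linftyNorm μ f).toReal :=
    abs_of_nonneg ENNReal.toReal_nonneg
  calc Z.N (rearrFun μ f) ≤ Z.N (fun _ => (linftyNorm μ f).toReal * 1) :=
        Z.lattice _ _ (measurable_rearrFun μ f).aemeasurable <| ae_of_all _ fun t => by
          rw [mul_one, hf', rearrFun, abs_of_nonneg ENNReal.toReal_nonneg]
          exact ENNReal.toReal_mono hf (rearr_le_linftyNorm μ f _)
    _ = Z.N (fun _ => 1) * linftyNorm μ f := by
        rw [Z.smul _ _ hZ, hf', ENNReal.ofReal_toReal hf, mul_comm]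

theorem FatouRepresentable.exists_le_mul_linftyNorm {ν : Measure β} {Y : QBLattice ν}
    (hY : FatouRepresentable Y) {B : ℕ → Set β} (hB : Monotone B)
    (hBν : Tendsto (fun k => ν (B k)) atTop (𝓝 ⊤)) {C : ℝ≥0∞} (hC : C < ⊤)
    (hYB : ∀ᶠ k in atTop, Y.N ((B k).indicator fun _ => 1) ≤ C) :
    ∃ C' : ℝ≥0, ∀ f : β → ℝ, Y.N f ≤ C' * linftyNorm ν f := by
  obtain ⟨Ybar, -, ⟨CF, -, hFatou⟩, hrep⟩ := hY
  obtain ⟨k₀, hk₀⟩ := eventually_atTop.1 hYB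
  set G : ℕ → ℝ → ℝ := fun k => rearrFun ν ((B (k + k₀)).indicator fun _ => 1)
  have hG (k : ℕ) (t : ℝ) : G k t = if ENNReal.ofReal t < ν (B (k + k₀)) then 1 else 0 :=
    rearrFun_indicator_one ν _ t
  have hGmono (k : ℕ) (t : ℝ) : 0 ≤ G k t ∧ G k t ≤ G (k + 1) t := by
    have : ν (B (k + k₀)) ≤ ν (B (k + 1 + k₀)) := measure_mono (hB (by omega))
    simp only [hG]
    split_ifs <;> simp_all [(lt_of_lt_of_le · this)]
  have hGlim (t : ℝ) : Tendsto (fun k => G k t) atTop (𝓝 1) := by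
    have hev := (hBν.comp (tendsto_add_atTop_nat k₀)).eventually
      (lt_mem_nhds (ENNReal.ofReal_lt_top (r := t)))
    exact tendsto_const_nhds.congr' (hev.mono fun k hk => ((hG k t).trans (if_pos hk)).symm)
  have hGsup : ⨆ k, Ybar.N (G k) ≤ C :=
    iSup_le fun k => (hrep _).symm.trans_le (hk₀ _ (by omega))
  have hone : Ybar.N (fun _ => 1) < ⊤ :=
    (hFatou G _ (fun k => (measurable_rearrFun ν _).aemeasurable)
      (fun k => ae_of_all _ (hGmono k)) (ae_of_all _ hGlim) (hGsup.trans_lt hC)).trans_lt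
      (ENNReal.mul_lt_top ENNReal.coe_lt_top (hGsup.trans_lt hC))
  refine ⟨(Ybar.N fun _ => 1).toNNReal + 1, fun f => ?_⟩
  rcases eq_or_ne (linftyNorm ν f) ⊤ with hf | hf
  · simp [hf]
  calc Y.N f = Ybar.N (rearrFun ν f) := hrep f
    _ ≤ (Ybar.N fun _ => 1) * linftyNorm ν f := Ybar.N_rearrFun_le_mul_linftyNorm hone hf
    _ ≤ _ := by
        gcongr
        rw [ENNReal.coe_add, ENNReal.coe_toNNReal hone.ne]
        exact le_self_add

theorem lintegral_meas_rpow_le_lorentzNorm (μ : Measure α) {p : ℝ} (hp : 1 ≤ p) (f : α → ℝ) :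
    ∫⁻ s in Ioi 0, μ {x | s < |f x|} ^ (1 / p) ≤ lorentzNorm μ p 1 f := by
  have hq : lorentzNorm μ p 1 f
      = ENNReal.ofReal p * ∫⁻ s in Ioi 0, μ {x | s < |f x|} ^ (1 / p) := by
    rw [lorentzNorm, div_one, ENNReal.rpow_one]
    congr 1
    refine setLIntegral_congr_fun measurableSet_Ioi fun s (hs : 0 < s) => ?_
    rw [ENNReal.rpow_one, mul_comm (ENNReal.ofReal s), mul_assoc,
      ENNReal.mul_inv_cancel (ENNReal.ofReal_pos.2 hs).ne' ENNReal.ofReal_ne_top, mul_one]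
  rw [hq]
  exact le_mul_of_one_le_left' (ENNReal.one_le_ofReal.2 hp)

theorem setLIntegral_sdiff_ball_norm_sub_rpow_le {E : Type*} [SeminormedAddCommGroup E]
    [MeasurableSpace E] (μ : Measure E) {s r : ℝ} (hs : s ≤ 0) (hr : 0 < r) (x : E) (A : Set E) :
    ∫⁻ y in A \ ball x r, ENNReal.ofReal (‖x - y‖ ^ s) ∂μ ≤ ENNReal.ofReal (r ^ s) * μ A :=
  calc ∫⁻ y in A \ ball x r, ENNReal.ofReal (‖x - y‖ ^ s) ∂μ
      ≤ ∫⁻ _ in A \ ball x r, ENNReal.ofReal (r ^ s) ∂μ := by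
        refine setLIntegral_mono measurable_const fun y hy => ?_
        have hxy : r ≤ ‖x - y‖ := by
          simpa [dist_eq_norm, norm_sub_rev] using hy.2
        exact ENNReal.ofReal_le_ofReal (Real.rpow_le_rpow_of_nonpos hr hxy hs)
    _ ≤ ENNReal.ofReal (r ^ s) * μ A := by
        rw [setLIntegral_const]
        gcongr
        exact sdiff_subset

theorem le_setLIntegral_ball_norm_sub_rpow {E : Type*} [NormedAddCommGroup E]
    [MeasurableSpace E] [OpensMeasurableSpace E] (μ : Measure E) [NullSingletonClass μ] {s r : ℝ}
    (hs : s ≤ 0) {x : E} (hx : x ∈ ball (0 : E) r) :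
    ENNReal.ofReal ((2 * r) ^ s) * μ (ball 0 r)
      ≤ ∫⁻ y in ball 0 r, ENNReal.ofReal (‖x - y‖ ^ s) ∂μ := by
  rw [← setLIntegral_const]
  refine setLIntegral_mono_ae' measurableSet_ball ?_
  filter_upwards [compl_mem_ae_iff.2 (measure_singleton x)] with y (hyx : y ≠ x) hy
  refine ENNReal.ofReal_le_ofReal (Real.rpow_le_rpow_of_nonpos
    (norm_pos_iff.2 (sub_ne_zero.2 hyx.symm)) ?_ hs)
  have := norm_sub_le x y
  linarith [mem_ball_zero_iff.1 hx, mem_ball_zero_iff.1 hy]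

section Kernel

variable {E : Type*} [NormedAddCommGroup E] [NormedSpace ℝ E] [FiniteDimensional ℝ E]
  [MeasurableSpace E] [BorelSpace E] (μ : Measure E) [μ.IsAddHaarMeasure]

theorem integral_ball_norm_rpow [Nontrivial E] {s r : ℝ} (hs : -(finrank ℝ E : ℝ) < s)
    (hr : 0 ≤ r) :
    ∫ z in ball (0 : E) r, ‖z‖ ^ s ∂μ
      = finrank ℝ E * μ.real (ball 0 1) * (r ^ (s + finrank ℝ E) / (s + finrank ℝ E)) := by
  have hpolar := integral_fun_norm_addHaar μ ((Iio r).indicator fun t => t ^ s)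
  have hlhs : ∫ z, (Iio r).indicator (fun t => t ^ s) ‖z‖ ∂μ
      = ∫ z in ball (0 : E) r, ‖z‖ ^ s ∂μ := by
    rw [← integral_indicator measurableSet_ball]
    congr 1 with z
    simp [indicator]
  have hrhs : ∫ t in Ioi (0 : ℝ), t ^ (finrank ℝ E - 1) • (Iio r).indicator (fun t => t ^ s) t
      = r ^ (s + finrank ℝ E) / (s + finrank ℝ E) := by
    have hd : 1 ≤ finrank ℝ E := finrank_pos
    calc _ = ∫ t in Ioi (0 : ℝ), (Iio r).indicator (fun t => t ^ (s + finrank ℝ E - 1)) t := by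
          refine setIntegral_congr_fun measurableSet_Ioi fun t (ht : 0 < t) => ?_
          by_cases htr : t < r
          · simp only [indicator_of_mem (show t ∈ Iio r from htr), smul_eq_mul]
            rw [← Real.rpow_natCast, ← Real.rpow_add ht]
            congr 1
            push_cast [hd]
            ring
          · simp [htr]
      _ = ∫ t in Ioc 0 r, t ^ (s + finrank ℝ E - 1) := by
          rw [integral_indicator measurableSet_Iio, Measure.restrict_restrict measurableSet_Iio,
            Iio_inter_Ioi, integral_Ioc_eq_integral_Ioo]
      _ = _ := by
          rw [← intervalIntegral.integral_of_le hr, integral_rpow (Or.inl (by linarith)),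
            sub_add_cancel, Real.zero_rpow (by linarith), sub_zero]
  rw [← hlhs, hpolar, hrhs, nsmul_eq_mul, smul_eq_mul, mul_assoc]

theorem setLIntegral_ball_norm_sub_rpow [Nontrivial E] (x : E) {s r : ℝ}
    (hs : -(finrank ℝ E : ℝ) < s) (hr : 0 ≤ r) :
    ∫⁻ y in ball x r, ENNReal.ofReal (‖x - y‖ ^ s) ∂μ
      = ENNReal.ofReal
          (finrank ℝ E * μ.real (ball 0 1) * (r ^ (s + finrank ℝ E) / (s + finrank ℝ E))) := by
  have hpre : (fun y => x - y) ⁻¹' ball 0 r = ball x r := by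
    ext y
    simp [dist_eq_norm, norm_sub_rev]
  have hint : IntegrableOn (fun z : E => ‖z‖ ^ s) (ball 0 r) μ :=
    integrableOn_ball_of_norm_le_rpow finrank_pos (C := 1) (α := -s) (by linarith)
      (ae_of_all _ fun z => by simp [abs_of_nonneg (Real.rpow_nonneg (norm_nonneg z) s)])
      (continuous_norm.measurable.pow_const s).aestronglyMeasurable
  rw [← hpre, (Measure.measurePreserving_sub_left μ x).setLIntegral_comp_preimage_emb
      (Homeomorph.subLeft x).measurableEmbedding (fun z => ENNReal.ofReal (‖z‖ ^ s)),
    ← integral_ball_norm_rpow μ hs hr,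
    ofReal_integral_eq_lintegral_ofReal hint (ae_of_all _ fun z => by positivity)]

theorem setLIntegral_norm_sub_rpow_le {γ : ℝ} (hγ0 : 0 < γ) (hγd : γ < finrank ℝ E)
    (x : E) (A : Set E) :
    ∫⁻ y in A, ENNReal.ofReal (‖x - y‖ ^ (γ - finrank ℝ E)) ∂μ
      ≤ ENNReal.ofReal (finrank ℝ E * μ.real (ball 0 1) / γ + 1) * μ A ^ (γ / finrank ℝ E) := by
  have hd : (0 : ℝ) < finrank ℝ E := hγ0.trans hγd
  have : Nontrivial E := nontrivial_of_finrank_pos (R := ℝ) (by exact_mod_cast hd)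
  set k := fun y => ENNReal.ofReal (‖x - y‖ ^ (γ - finrank ℝ E))
  set m := μ A
  rcases eq_or_ne m 0 with hm0 | hm0
  · simp [setLIntegral_measure_zero A k hm0]
  rcases eq_or_ne m ⊤ with hmtop | hmtop
  · rw [hmtop, ENNReal.top_rpow_of_pos (div_pos hγ0 hd),
      ENNReal.mul_top (ENNReal.ofReal_pos.2 (by positivity)).ne']
    exact le_top
  set r := m.toReal ^ (finrank ℝ E : ℝ)⁻¹
  have hm : 0 < m.toReal := ENNReal.toReal_pos hm0 hmtop
  have hr : 0 < r := by positivity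
  have hr_rpow (z : ℝ) : ENNReal.ofReal (r ^ z) = m ^ (z / finrank ℝ E) := by
    rw [← Real.rpow_mul hm.le, ← ENNReal.ofReal_rpow_of_pos hm, ENNReal.ofReal_toReal hmtop,
      inv_mul_eq_div]
  have hnear : ∫⁻ y in A ∩ ball x r, k y ∂μ
      ≤ ENNReal.ofReal (finrank ℝ E * μ.real (ball 0 1) / γ) * m ^ (γ / finrank ℝ E) :=
    calc ∫⁻ y in A ∩ ball x r, k y ∂μ ≤ ∫⁻ y in ball x r, k y ∂μ :=
          lintegral_mono_set inter_subset_right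
      _ = _ := by
          rw [setLIntegral_ball_norm_sub_rpow μ x (by linarith) hr.le, sub_add_cancel,
            ← hr_rpow, ← ENNReal.ofReal_mul (by positivity)]
          ring_nf
  have hfar : ∫⁻ y in A \ ball x r, k y ∂μ ≤ m ^ (γ / finrank ℝ E) := by
    refine (setLIntegral_sdiff_ball_norm_sub_rpow_le μ (by linarith) hr x A).trans_eq ?_
    rw [hr_rpow, ← ENNReal.rpow_one (μ A), ← ENNReal.rpow_add _ _ hm0 hmtop]
    congr 1
    field_simp
    ring
  calc ∫⁻ y in A, k y ∂μ ≤ ∫⁻ y in A ∩ ball x r, k y ∂μ + ∫⁻ y in A \ ball x r, k y ∂μ := by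
        conv_lhs => rw [← inter_union_sdiff A (ball x r)]
        exact lintegral_union_le _ _ _
    _ ≤ _ := by
        grw [hnear, hfar]
        rw [ENNReal.ofReal_add (by positivity) zero_le_one, ENNReal.ofReal_one, add_mul, one_mul]

theorem lintegral_enorm_mul_norm_sub_rpow_le {γ : ℝ} (hγ0 : 0 < γ)
    (hγd : γ < finrank ℝ E) {f : E → ℝ} (hf : AEMeasurable f μ) (x : E) :
    ∫⁻ y, ‖f y‖ₑ * ENNReal.ofReal (‖x - y‖ ^ (γ - finrank ℝ E)) ∂μ
      ≤ ENNReal.ofReal (finrank ℝ E * μ.real (ball 0 1) / γ + 1)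
          * ∫⁻ s in Ioi 0, μ {y | s < |f y|} ^ (γ / finrank ℝ E) := by
  set k := fun y => ENNReal.ofReal (‖x - y‖ ^ (γ - finrank ℝ E))
  have hk : Measurable k := by fun_prop
  have hfν : AEMeasurable f (μ.withDensity k) := hf.mono_ac (withDensity_absolutelyContinuous μ k)
  calc ∫⁻ y, ‖f y‖ₑ * k y ∂μ = ∫⁻ y, ENNReal.ofReal |f y| ∂μ.withDensity k := by
        rw [lintegral_withDensity_eq_lintegral_mul₀ hk.aemeasurable hf.abs.ennreal_ofReal]
        simp_rw [Pi.mul_apply, mul_comm (k _), Real.enorm_eq_ofReal_abs]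
    _ = ∫⁻ s in Ioi 0, ∫⁻ y in {y | s < |f y|}, k y ∂μ := by
        rw [lintegral_eq_lintegral_meas_lt _ (ae_of_all _ fun y => abs_nonneg (f y)) hfν.abs]
        simp_rw [withDensity_apply']
    _ ≤ ∫⁻ s in Ioi 0, ENNReal.ofReal (finrank ℝ E * μ.real (ball 0 1) / γ + 1)
          * μ {y | s < |f y|} ^ (γ / finrank ℝ E) :=
        lintegral_mono fun s => setLIntegral_norm_sub_rpow_le μ hγ0 hγd x _
    _ = _ := lintegral_const_mul' _ _ ENNReal.ofReal_ne_top

theorem measure_ball_rpow_div_finrank [Nontrivial E] (x : E) {r p : ℝ} (hr : 0 ≤ r)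
    (hp : 0 ≤ p) :
    μ (ball x r) ^ (p / finrank ℝ E)
      = ENNReal.ofReal (r ^ p) * μ (ball 0 1) ^ (p / finrank ℝ E) := by
  rw [Measure.addHaar_ball μ x hr, ENNReal.mul_rpow_of_nonneg _ _ (by positivity),
    ENNReal.ofReal_rpow_of_nonneg (by positivity) (by positivity), ← Real.rpow_natCast,
    ← Real.rpow_mul hr, mul_div_cancel₀ _ (by simp [finrank_pos.ne'])]

theorem tendsto_measure_ball_nat_atTop [Nontrivial E] (x : E) :
    Tendsto (fun k : ℕ => μ (ball x k)) atTop (𝓝 ⊤) := by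
  have h := tendsto_measure_iUnion_atTop (μ := μ)
    (fun i j (hij : i ≤ j) => ball_subset_ball (x := x) (Nat.cast_le.2 hij))
  rwa [iUnion_ball_nat, measure_univ_of_isAddLeftInvariant] at h

end Kernel

section Riesz

variable {n : ℕ} {γ : ℝ}

local notation "E'" => EuclideanSpace ℝ (Fin n)

def rieszConst (n : ℕ) (γ : ℝ) : ℝ :=
  Real.pi ^ ((n : ℝ) / 2) * 2 ^ γ * Real.Gamma (γ / 2) / Real.Gamma (((n : ℝ) - γ) / 2)

theorem riesz_apply (f : E' → ℝ) (x : E') :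
    riesz n γ f x = rieszConst n γ * ∫ y, f y * ‖x - y‖ ^ (γ - n) :=
  rfl

theorem rieszConst_pos (hγ0 : 0 < γ) (hγn : γ < n) : 0 < rieszConst n γ := by
  unfold rieszConst
  have := Real.Gamma_pos_of_pos (half_pos hγ0)
  have := Real.Gamma_pos_of_pos (half_pos (sub_pos.2 hγn))
  positivity

theorem riesz_const_mul (c : ℝ) (f : E' → ℝ) (x : E') :
    riesz n γ (fun y => c * f y) x = c * riesz n γ f x := by
  simp only [riesz_apply, mul_assoc, integral_const_mul]
  ring

theorem enorm_riesz_le (f : E' → ℝ) (x : E') :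
    ‖riesz n γ f x‖ₑ
      ≤ ‖rieszConst n γ‖ₑ * ∫⁻ y, ‖f y‖ₑ * ENNReal.ofReal (‖x - y‖ ^ (γ - n)) := by
  rw [riesz_apply, enorm_mul]
  gcongr
  refine (enorm_integral_le_lintegral_enorm _).trans (lintegral_mono fun y => ?_)
  rw [enorm_mul, Real.enorm_of_nonneg (Real.rpow_nonneg (norm_nonneg _) _)]

theorem exists_linftyNorm_riesz_le_lorentzNorm (hγ0 : 0 < γ) (hγn : γ < n) :
    ∃ C : ℝ≥0, ∀ f : E' → ℝ, AEMeasurable f →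
      linftyNorm volume (riesz n γ f) ≤ C * lorentzNorm volume (n / γ) 1 f := by
  have hγd : γ < finrank ℝ E' := by simpa using hγn
  refine ⟨‖rieszConst n γ‖₊ * Real.toNNReal (n * volume.real (ball (0 : E') 1) / γ + 1),
    fun f hf => essSup_le_of_ae_le _ (ae_of_all _ fun x => ?_)⟩
  have hker := lintegral_enorm_mul_norm_sub_rpow_le volume hγ0 hγd hf x
  rw [finrank_euclideanSpace_fin] at hker
  have hlor := lintegral_meas_rpow_le_lorentzNorm volume
    ((one_le_div hγ0).2 hγn.le) f
  rw [one_div_div] at hlor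
  calc (‖riesz n γ f x‖₊ : ℝ≥0∞) = ‖riesz n γ f x‖ₑ := rfl
    _ ≤ ‖rieszConst n γ‖ₑ * ∫⁻ y, ‖f y‖ₑ * ENNReal.ofReal (‖x - y‖ ^ (γ - n)) :=
        enorm_riesz_le f x
    _ ≤ ‖rieszConst n γ‖ₑ * (ENNReal.ofReal (n * volume.real (ball (0 : E') 1) / γ + 1)
          * lorentzNorm volume (n / γ) 1 f) := by
        grw [hker, hlor]
    _ = _ := by
        rw [← mul_assoc]
        rfl

theorem riesz_indicator_ball_ge (hγ0 : 0 < γ) (hγn : γ < n) {r : ℝ} (hr : 0 < r) {x : E'}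
    (hx : x ∈ ball (0 : E') r) :
    rieszConst n γ * 2 ^ (γ - n) * (volume (ball (0 : E') 1)).toReal * r ^ γ
      ≤ riesz n γ ((ball (0 : E') r).indicator fun _ => 1) x := by
  have hγd : γ < finrank ℝ E' := by simpa using hγn
  have : Nontrivial E' := nontrivial_of_finrank_pos (R := ℝ) (by exact_mod_cast hγ0.trans hγd)
  set k := fun y : E' => ‖x - y‖ ^ (γ - n)
  have hfin : ∫⁻ y in ball 0 r, ENNReal.ofReal (k y) ≠ ⊤ := by
    have h := setLIntegral_norm_sub_rpow_le volume hγ0 hγd x (ball 0 r)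
    rw [finrank_euclideanSpace_fin] at h
    exact (h.trans_lt (ENNReal.mul_lt_top ENNReal.ofReal_lt_top
      (ENNReal.rpow_lt_top_of_nonneg (by positivity) measure_ball_lt_top.ne))).ne
  have hlow := le_setLIntegral_ball_norm_sub_rpow volume (s := γ - n) (by linarith) hx
  have hvol : volume.real (ball (0 : E') r) = r ^ n * volume.real (ball (0 : E') 1) := by
    rw [Measure.real, Measure.addHaar_ball volume 0 hr.le, ENNReal.toReal_mul,
      ENNReal.toReal_ofReal (by positivity), finrank_euclideanSpace_fin, Measure.real]
  calc rieszConst n γ * 2 ^ (γ - n) * volume.real (ball (0 : E') 1) * r ^ γ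
      = rieszConst n γ * ((2 * r) ^ (γ - n) * volume.real (ball (0 : E') r)) := by
        rw [hvol, Real.mul_rpow zero_le_two hr.le, ← Real.rpow_natCast r n]
        have : r ^ γ = r ^ (γ - n) * r ^ (n : ℝ) := by
          rw [← Real.rpow_add hr, sub_add_cancel]
        rw [this]
        ring
    _ ≤ rieszConst n γ * ∫ y in ball 0 r, k y := by
        gcongr
        · exact (rieszConst_pos hγ0 hγn).le
        rw [integral_eq_lintegral_of_nonneg_ae (ae_of_all _ fun y => by positivity)
          (by fun_prop)]
        calc (2 * r) ^ (γ - n) * volume.real (ball (0 : E') r)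
            = (ENNReal.ofReal ((2 * r) ^ (γ - n)) * volume (ball (0 : E') r)).toReal := by
              rw [ENNReal.toReal_mul, ENNReal.toReal_ofReal (by positivity), Measure.real]
          _ ≤ _ := ENNReal.toReal_mono hfin hlow
    _ = riesz n γ ((ball (0 : E') r).indicator fun _ => 1) x := by
        rw [riesz_apply, ← integral_indicator measurableSet_ball]
        congr 2 with y
        by_cases hy : y ∈ ball (0 : E') r <;> simp [hy, k]

theorem exists_N_indicator_ball_le (hγ0 : 0 < γ) (hγn : γ < n)
    {X Y : QBLattice (volume : Measure E')} (hX : X.RearrInv) {CT : ℝ≥0}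
    (hT : ∀ f, Y.N (riesz n γ f) ≤ CT * X.N f) {a M : ℝ≥0∞} (hM : M < ⊤)
    (hfund : ∀ t, a < t → t < ⊤ → X.fund t ≤ t ^ (γ / n) * M) :
    ∃ C < ⊤, ∀ r > 0, a < volume (ball (0 : E') r) →
      Y.N ((ball (0 : E') r).indicator fun _ => 1) ≤ C := by
  have hn : (0 : ℝ) < n := hγ0.trans hγn
  have : Nontrivial E' :=
    nontrivial_of_finrank_pos (R := ℝ) (by simpa using (Nat.cast_pos.1 hn))
  set V := volume (ball (0 : E') 1)
  have hVfin : V ^ (γ / n) < ⊤ :=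
    ENNReal.rpow_lt_top_of_nonneg (by positivity) measure_ball_lt_top.ne
  set κ := rieszConst n γ * 2 ^ (γ - n) * V.toReal
  have hκ : 0 < κ := mul_pos (mul_pos (rieszConst_pos hγ0 hγn) (by positivity))
    (ENNReal.toReal_pos (measure_ball_pos _ _ one_pos).ne' measure_ball_lt_top.ne)
  refine ⟨CT * (ENNReal.ofReal κ⁻¹ * V ^ (γ / n) * M), by finiteness, fun r hr har => ?_⟩
  set χ := (ball (0 : E') r).indicator fun _ => (1 : ℝ)
  have hχX : X.N χ ≤ ENNReal.ofReal (r ^ γ) * V ^ (γ / n) * M := by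
    rw [← hX.fund_eq measurableSet_ball]
    refine (hfund _ har measure_ball_lt_top).trans_eq ?_
    have hscale := measure_ball_rpow_div_finrank volume (0 : E') hr.le hγ0.le
    rw [finrank_euclideanSpace_fin] at hscale
    rw [hscale]
  have hχT (y : E') : |χ y| ≤ |riesz n γ (fun z => (κ * r ^ γ)⁻¹ * χ z) y| := by
    by_cases hy : y ∈ ball (0 : E') r
    · rw [riesz_const_mul, show χ y = 1 from indicator_of_mem hy _, abs_one]
      refine le_trans ?_ (le_abs_self _)
      rw [le_inv_mul_iff₀ (by positivity), mul_one]
      exact riesz_indicator_ball_ge hγ0 hγn hr hy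
    · simp [χ, hy]
  calc Y.N χ ≤ Y.N (riesz n γ fun z => (κ * r ^ γ)⁻¹ * χ z) :=
        Y.lattice _ _ (measurable_const.indicator measurableSet_ball).aemeasurable
          (ae_of_all _ hχT)
    _ ≤ CT * X.N (fun z => (κ * r ^ γ)⁻¹ * χ z) := hT _
    _ = CT * (ENNReal.ofReal (κ * r ^ γ)⁻¹ * X.N χ) := by
        rw [X.smul _ _ (hχX.trans_lt (by finiteness)), abs_of_pos (by positivity)]
    _ ≤ CT * (ENNReal.ofReal (κ * r ^ γ)⁻¹ * (ENNReal.ofReal (r ^ γ) * V ^ (γ / n) * M)) := by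
        gcongr
    _ = CT * (ENNReal.ofReal κ⁻¹ * V ^ (γ / n) * M) := by
        have hscale : ENNReal.ofReal (κ * r ^ γ)⁻¹ * ENNReal.ofReal (r ^ γ)
            = ENNReal.ofReal κ⁻¹ := by
          rw [← ENNReal.ofReal_mul (by positivity), mul_inv, mul_assoc,
            inv_mul_cancel₀ (by positivity), mul_one]
        rw [← hscale]
        ring

end Riesz

theorem riesz_optimal_Linfty_target_general
    (n : ℕ) (γ : ℝ) (hγ0 : 0 < γ) (hγn : γ < n)
    (X : QBLattice (volume : Measure (EuclideanSpace ℝ (Fin n))))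
    (hXri : X.RearrInv)
    (hXLp1 : ∃ C : ℝ≥0, ∀ f : EuclideanSpace ℝ (Fin n) → ℝ,
      lorentzNorm (volume : Measure (EuclideanSpace ℝ (Fin n))) ((n : ℝ) / γ) 1 f
        ≤ C * X.N f)
    (hfund : Filter.limsup (fun t : ℝ≥0∞ => t ^ (-(γ / (n : ℝ))) * X.fund t)
      (nhdsWithin ⊤ (Set.Iio ⊤)) < ⊤) :
    (∃ C : ℝ≥0, ∀ f : EuclideanSpace ℝ (Fin n) → ℝ,
      linftyNorm (volume : Measure (EuclideanSpace ℝ (Fin n))) (riesz n γ f)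
        ≤ C * X.N f) ∧
    ∀ Y : QBLattice (volume : Measure (EuclideanSpace ℝ (Fin n))),
      Y.RearrInv → FatouRepresentable Y →
      (∃ C : ℝ≥0, ∀ f : EuclideanSpace ℝ (Fin n) → ℝ, Y.N (riesz n γ f) ≤ C * X.N f) →
      ∃ C : ℝ≥0, ∀ f : EuclideanSpace ℝ (Fin n) → ℝ,
        Y.N f ≤ C * linftyNorm volume f := by
  constructor
  · obtain ⟨CL, hCL⟩ := hXLp1
    obtain ⟨CR, hCR⟩ := exists_linftyNorm_riesz_le_lorentzNorm hγ0 hγn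
    refine ⟨CR * CL + 1, fun f => ?_⟩
    rcases eq_or_ne (X.N f) ⊤ with hf | hf
    · simp [hf]
    calc linftyNorm volume (riesz n γ f) ≤ CR * lorentzNorm volume (n / γ) 1 f :=
          hCR f (X.mem_aemeasurable f hf.lt_top)
      _ ≤ CR * CL * X.N f := by grw [hCL f, mul_assoc]
      _ ≤ ↑(CR * CL + 1) * X.N f := by gcongr; exact_mod_cast le_self_add
  · intro Y _ hY ⟨CT, hT⟩
    have : Nontrivial (EuclideanSpace ℝ (Fin n)) :=
      nontrivial_of_finrank_pos (R := ℝ) (by simpa using (Nat.cast_pos.1 (hγ0.trans hγn)))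
    obtain ⟨a, ha, M, hM, hXfund⟩ := ENNReal.exists_le_rpow_mul_of_limsup_lt_top hfund
    obtain ⟨C, hC, hball⟩ := exists_N_indicator_ball_le hγ0 hγn hXri hT hM hXfund
    have hvol := tendsto_measure_ball_nat_atTop volume (0 : EuclideanSpace ℝ (Fin n))
    refine hY.exists_le_mul_linftyNorm (fun i j hij => ball_subset_ball (Nat.cast_le.2 hij))
      hvol hC ?_
    filter_upwards [hvol.eventually (lt_mem_nhds ha), eventually_gt_atTop 0] with k hak hk
    exact hball k (Nat.cast_pos.2 hk) hak

/-- if `X` is an r.i. quasi-Banach lattice over `ℝⁿ` containing simple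
functions with `X ↪ L^{n/α,1}(ℝⁿ)` and `limsup_{t→∞} t^{-α/n} φ_X(t) < ∞`, then `L^∞(ℝⁿ)`
is the optimal target for `(I_α, X, 𝒞)` with `𝒞` the Fatou-representable r.i.
quasi-Banach lattices. -/
theorem riesz_optimal_Linfty_target
    (n : ℕ) (γ : ℝ) (hγ0 : 0 < γ) (hγn : γ < n)
    (X : QBLattice (volume : Measure (EuclideanSpace ℝ (Fin n))))
    (hXri : X.RearrInv)
    (hXsimple : ∀ s : EuclideanSpace ℝ (Fin n) → ℝ,
      NestedSimple (volume : Measure (EuclideanSpace ℝ (Fin n))) s → X.N s < ⊤)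
    (hXLp1 : ∃ C : ℝ≥0, ∀ f : EuclideanSpace ℝ (Fin n) → ℝ,
      lorentzNorm (volume : Measure (EuclideanSpace ℝ (Fin n))) ((n : ℝ) / γ) 1 f
        ≤ C * X.N f)
    (hfund : Filter.limsup (fun t : ℝ≥0∞ => t ^ (-(γ / (n : ℝ))) * X.fund t)
      (nhdsWithin ⊤ (Set.Iio ⊤)) < ⊤) :
    (∃ C : ℝ≥0, ∀ f : EuclideanSpace ℝ (Fin n) → ℝ,
      linftyNorm (volume : Measure (EuclideanSpace ℝ (Fin n))) (riesz n γ f)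
        ≤ C * X.N f) ∧
    ∀ Y : QBLattice (volume : Measure (EuclideanSpace ℝ (Fin n))),
      Y.RearrInv → FatouRepresentable Y →
      (∃ C : ℝ≥0, ∀ f : EuclideanSpace ℝ (Fin n) → ℝ, Y.N (riesz n γ f) ≤ C * X.N f) →
      ∃ C : ℝ≥0, ∀ f : EuclideanSpace ℝ (Fin n) → ℝ,
        Y.N f ≤ C * linftyNorm volume f :=
  riesz_optimal_Linfty_target_general n γ hγ0 hγn X hXri hXLp1 hfund
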